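/- Let V be the (hq)×h matrix over ℤ/qℤ whose rows are all multiples m·e_j^T for m ∈ {0,…,q-1}, j ∈ [h]. Define f(t,r) as the number of r-tuples (ξ(1),…,ξ(r)) ∈ [hq]^r with Σ_i V_{ξ(i),:} = β, for any fixed β with exactly t nonzero coordinates (this is well-defined). Then f satisfies the recurrence f(t,r) = t·f(t-1,r-1) + (h + t(q-2))·f(t,r-1) + (h-t)(q-1)·f(t+1,r-1), with base cases f(0,0)=1 and f(t,0)=0 for t ≥ 1. -/
import Mathlib


/-- The row of the word-decoding matrix `V` indexed by the pair `(j, m)`: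
the vector `m · e_j ∈ (ℤ/qℤ)^h`. -/
noncomputable def Vrow (q h : ℕ) [NeZero q] (r : Fin h × ZMod q) : Fin h → ZMod q :=
  Pi.single r.1 r.2

/-- `|Preimage_V(β)|` with tuples of length `r`. -/
noncomputable def preimageCard (q h r : ℕ) [NeZero q] (β : Fin h → ZMod q) : ℕ :=
  (Finset.univ.filter (fun ξ : Fin r → Fin h × ZMod q =>
    (∑ i, Vrow q h (ξ i)) = β)).card

/-- A canonical vector in `(ℤ/qℤ)^h` with exactly `min t h` nonzero coordinates. -/
noncomputable def canonVec (q h t : ℕ) [NeZero q] : Fin h → ZMod q :=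
  fun i => if (i : ℕ) < t then 1 else 0

/-- `f(t,r)`: the number of `r`-tuples of rows of `V` summing to a fixed vector with
`t` nonzero coordinates (defined via the canonical such vector). -/
noncomputable def fCount (q h : ℕ) [NeZero q] (t r : ℕ) : ℕ :=
  preimageCard q h r (canonVec q h t)

def suppc {q h : ℕ} [NeZero q] (β : Fin h → ZMod q) : ℕ :=
  (Finset.univ.filter fun i => β i ≠ 0).card

lemma suppc_le {q h : ℕ} [NeZero q] (β : Fin h → ZMod q) : suppc β ≤ h := by
  simpa [suppc] using Finset.card_filter_le Finset.univ (fun i => β i ≠ 0)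

lemma suppc_eq_zero_iff {q h : ℕ} [NeZero q] (β : Fin h → ZMod q) :
    suppc β = 0 ↔ β = 0 := by
  simp [suppc, Finset.filter_eq_empty_iff, funext_iff]

lemma suppc_canon {q h : ℕ} [NeZero q] (hq : 2 ≤ q) {t : ℕ} (ht : t ≤ h) :
    suppc (canonVec q h t) = t := by
  haveI : Fact (1 < q) := ⟨hq⟩
  have : (Finset.univ.filter fun i : Fin h => canonVec q h t i ≠ 0)
      = Finset.univ.filter fun i : Fin h => (i : ℕ) < t := by
    apply Finset.filter_congr
    intro i _
    by_cases hi : (i : ℕ) < t <;> simp [canonVec, hi]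
  rw [suppc, this]
  rw [Finset.card_eq_of_bijective (fun n hn => ⟨n, lt_of_lt_of_le hn ht⟩)]
  · intro a ha
    simp only [Finset.mem_filter] at ha
    exact ⟨a, ha.2, by simp⟩
  · intro n hn; simp [hn]
  · intro n m hn hm hnm
    simpa [Fin.ext_iff] using hnm

lemma preimageCard_zero {q h : ℕ} [NeZero q] (β : Fin h → ZMod q) :
    preimageCard q h 0 β = if β = 0 then 1 else 0 := by
  by_cases hb : β = 0 <;> simp [preimageCard, hb, eq_comm]

lemma sub_vrow_eq_update {q h : ℕ} [NeZero q] (β : Fin h → ZMod q) (j : Fin h) (m : ZMod q) :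
    β - Vrow q h (j, m) = Function.update β j (β j - m) := by
  funext i
  by_cases hij : i = j
  · subst hij; simp [Vrow]
  · simp [Vrow, Function.update, hij, Pi.single_apply]

lemma suppc_update {q h : ℕ} [NeZero q] (β : Fin h → ZMod q) (j : Fin h) (a : ZMod q) :
    suppc (Function.update β j a)
      = (suppc β - if β j ≠ 0 then 1 else 0) + if a ≠ 0 then 1 else 0 := by
  have h1 : suppc (Function.update β j a)
      = (if a ≠ 0 then 1 else 0) + ∑ i ∈ Finset.univ.erase j,
          (if β i ≠ 0 then 1 else 0) := by
    rw [suppc, Finset.card_filter, ← Finset.add_sum_erase _ _ (Finset.mem_univ j)]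
    congr 1
    · simp
    · exact Finset.sum_congr rfl fun i hi => by
        simp [Function.update_of_ne (Finset.ne_of_mem_erase hi)]
  have h2 : suppc β
      = (if β j ≠ 0 then 1 else 0) + ∑ i ∈ Finset.univ.erase j,
          (if β i ≠ 0 then 1 else 0) := by
    rw [suppc, Finset.card_filter, ← Finset.add_sum_erase _ _ (Finset.mem_univ j)]
  rw [h1, h2]
  omega

lemma preimage_succ {q h : ℕ} [NeZero q] (r : ℕ) (β : Fin h → ZMod q) :
    preimageCard q h (r + 1) β
      = ∑ p : Fin h × ZMod q, preimageCard q h r (β - Vrow q h p) := by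
  simp only [preimageCard, Finset.card_filter]
  rw [Fintype.sum_equiv (Fin.consEquiv (fun _ : Fin (r+1) => Fin h × ZMod q)).symm
    (fun ξ : Fin (r+1) → Fin h × ZMod q => if (∑ i, Vrow q h (ξ i)) = β then 1 else 0)
    (fun pv : (Fin h × ZMod q) × (Fin r → Fin h × ZMod q) =>
      if (∑ i, Vrow q h (pv.2 i)) = β - Vrow q h pv.1 then 1 else 0) ?_]
  · rw [Fintype.sum_prod_type]
  · intro ξ
    simp only [Fin.consEquiv_symm_apply]
    rw [Fin.sum_univ_succ]
    refine if_congr ?_ rfl rfl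
    have htail : Fin.tail ξ = fun x => ξ x.succ := rfl
    rw [htail, eq_sub_iff_add_eq, add_comm]

lemma sum_zmod_ite {q : ℕ} [NeZero q] (c : ZMod q) (X Y : ℕ) :
    (∑ m : ZMod q, if m = c then X else Y) = X + (q - 1) * Y := by
  rw [Finset.sum_ite]
  simp only [Finset.sum_const, smul_eq_mul]
  rw [Finset.filter_eq', if_pos (Finset.mem_univ c), Finset.filter_ne',
    Finset.card_erase_of_mem (Finset.mem_univ c)]
  simp [ZMod.card]

lemma keysum {q h : ℕ} [NeZero q] (hq : 2 ≤ q) (n : ℕ) (β : Fin h → ZMod q) :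
    (∑ p : Fin h × ZMod q, fCount q h (suppc (β - Vrow q h p)) n)
      = suppc β * fCount q h (suppc β - 1) n
        + (h + suppc β * (q - 2)) * fCount q h (suppc β) n
        + (h - suppc β) * (q - 1) * fCount q h (suppc β + 1) n := by
  set t := suppc β with hts
  rw [Fintype.sum_prod_type]
  have hinner : ∀ j : Fin h,
      (∑ m : ZMod q, fCount q h (suppc (β - Vrow q h (j, m))) n)
        = if β j ≠ 0 then fCount q h (t - 1) n + (q - 1) * fCount q h t n
          else fCount q h t n + (q - 1) * fCount q h (t + 1) n := by
    intro j
    have hconv : ∀ m : ZMod q, suppc (β - Vrow q h (j, m))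
        = (t - if β j ≠ 0 then 1 else 0) + if β j - m ≠ 0 then 1 else 0 := by
      intro m; rw [sub_vrow_eq_update, suppc_update]
    by_cases hj : β j = 0
    · have : ∀ m : ZMod q, fCount q h (suppc (β - Vrow q h (j, m))) n
          = if m = 0 then fCount q h t n else fCount q h (t + 1) n := by
        intro m
        rw [hconv]
        by_cases hm : m = 0 <;> simp [hj, hm]
      rw [Finset.sum_congr rfl fun m _ => this m, sum_zmod_ite]
      simp [hj]
    · have ht1 : 1 ≤ t := by
        refine Finset.card_pos.mpr ⟨j, ?_⟩
        simp [hj]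
      have : ∀ m : ZMod q, fCount q h (suppc (β - Vrow q h (j, m))) n
          = if m = β j then fCount q h (t - 1) n else fCount q h t n := by
        intro m
        rw [hconv]
        by_cases hm : m = β j
        · simp [hj, hm]
        · have : β j - m ≠ 0 := sub_ne_zero.mpr (Ne.symm hm)
          simp only [hj, ne_eq, not_false_eq_true, if_pos, this, if_neg hm]
          congr 1
          omega
      rw [Finset.sum_congr rfl fun m _ => this m, sum_zmod_ite]
      simp [hj]
  rw [Finset.sum_congr rfl fun j _ => hinner j, Finset.sum_ite]
  simp only [Finset.sum_const, smul_eq_mul]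
  have hcard1 : (Finset.univ.filter fun j : Fin h => β j ≠ 0).card = t := rfl
  have hcard2 : (Finset.univ.filter fun j : Fin h => ¬ β j ≠ 0).card = h - t := by
    have := Finset.card_filter_add_card_filter_not
      (s := (Finset.univ : Finset (Fin h))) (p := fun j => β j ≠ 0)
    have hth : t ≤ h := suppc_le β
    simp only [Finset.card_univ, Fintype.card_fin, hcard1] at this ⊢
    omega
  rw [hcard1, hcard2]
  have hth : t ≤ h := suppc_le β
  have hc : t * (q - 1) + (h - t) = h + t * (q - 2) := by
    obtain ⟨x, rfl⟩ : ∃ x, q = x + 2 := ⟨q - 2, by omega⟩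
    simp only [Nat.add_sub_cancel]
    have h1 : x + 2 - 1 = x + 1 := by omega
    rw [h1, Nat.mul_succ]
    generalize t * x = T
    omega
  rw [← hc]
  set A := fCount q h (t - 1) n
  set B := fCount q h t n
  set C := fCount q h (t + 1) n
  set u := q - 1
  set v := h - t
  ring

lemma main_lemma {q h : ℕ} [NeZero q] (hq : 2 ≤ q) :
    ∀ (r : ℕ) (β : Fin h → ZMod q), preimageCard q h r β = fCount q h (suppc β) r := by
  intro r
  induction r with
  | zero =>
    intro β
    rw [preimageCard_zero, fCount, preimageCard_zero]
    have h1 : suppc (canonVec q h (suppc β)) = suppc β := suppc_canon hq (suppc_le β)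
    by_cases hb : β = 0
    · have h2 : suppc β = 0 := (suppc_eq_zero_iff β).mpr hb
      have hc : canonVec q h (suppc β) = 0 :=
        (suppc_eq_zero_iff _).mp (by rw [h1, h2])
      rw [if_pos hb, if_pos hc]
    · have h2 : suppc β ≠ 0 := fun hcontra => hb ((suppc_eq_zero_iff β).mp hcontra)
      have hc : canonVec q h (suppc β) ≠ 0 := fun hcontra =>
        h2 (by rw [← h1]; exact (suppc_eq_zero_iff _).mpr hcontra)
      rw [if_neg hb, if_neg hc]
  | succ r ih =>
    intro β
    have step : ∀ γ : Fin h → ZMod q, preimageCard q h (r+1) γ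
        = suppc γ * fCount q h (suppc γ - 1) r
          + (h + suppc γ * (q-2)) * fCount q h (suppc γ) r
          + (h - suppc γ) * (q-1) * fCount q h (suppc γ + 1) r := by
      intro γ
      rw [preimage_succ, Finset.sum_congr rfl fun p _ => ih _, keysum hq]
    rw [step β, show fCount q h (suppc β) (r+1)
        = preimageCard q h (r+1) (canonVec q h (suppc β)) from rfl, step _,
      suppc_canon hq (suppc_le β)]

/-- `f(t,r)` is well-defined (equals the count for any `β` with `t` nonzero
coordinates) and satisfies the recurrence
`f(t,r) = t f(t-1,r-1) + (h + t(q-2)) f(t,r-1) + (h-t)(q-1) f(t+1,r-1)`,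
with base cases `f(0,0) = 1` and `f(t,0) = 0` for `t ≥ 1`.  (Natural-number
subtraction encodes the conventions `f(-1,·) = 0` and the vanishing coefficient
at `t = h`.) -/
theorem preimage_card_recurrence (q h t r : ℕ) [NeZero q]
    (hq : 2 ≤ q) (ht : t ≤ h) (hr : 1 ≤ r) :
    (∀ β : Fin h → ZMod q, (Finset.univ.filter (fun i => β i ≠ 0)).card = t →
        preimageCard q h r β = fCount q h t r) ∧
    fCount q h t r =
      t * fCount q h (t - 1) (r - 1) + (h + t * (q - 2)) * fCount q h t (r - 1) +
        (h - t) * (q - 1) * fCount q h (t + 1) (r - 1) ∧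
    fCount q h 0 0 = 1 ∧ (1 ≤ t → fCount q h t 0 = 0) := by
  refine ⟨?_, ?_, ?_, ?_⟩
  · intro β hβ
    have hmain := main_lemma (h := h) hq r β
    have hs : suppc β = t := hβ
    rwa [hs] at hmain
  · obtain ⟨n, rfl⟩ : ∃ n, r = n + 1 := ⟨r - 1, by omega⟩
    simp only [Nat.add_sub_cancel]
    rw [show fCount q h t (n+1) = preimageCard q h (n+1) (canonVec q h t) from rfl,
      preimage_succ, Finset.sum_congr rfl fun p _ => main_lemma hq n _, keysum hq,
      suppc_canon hq ht]
  · rw [fCount, preimageCard_zero, if_pos]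
    funext i; simp [canonVec]
  · intro ht1
    rw [fCount, preimageCard_zero, if_neg]
    intro hc
    have h1 : suppc (canonVec q h t) = t := suppc_canon hq ht
    rw [hc] at h1
    have h0 : suppc (0 : Fin h → ZMod q) = 0 := (suppc_eq_zero_iff _).mpr rfl
    omega
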